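/- arXiv:2411.04462 — 2 statements merged into one kernel-verified Lean document; each statement's English description precedes it below -/
import Mathlib

section
/- Suppose F : Δ(A) → Δ(A) arises from N action samples via some g : A^N → Δ(A). Then for every a' ∈ A and every t ∈ (0,1] there exists λ(t) > 0 (one may take λ(t) = t^N) such that for all p, q ∈ Δ(A) with p(a) ≥ t·q(a) for every a ∈ A, one has F(p)(a') ≥ λ(t)·F(q)(a'). -/
open Filter Asymptotics Topology

/-- `π` is a probability distribution on the finite set `A`. -/
def IsDist {A : Type} [Fintype A] (π : A → ℝ) : Prop :=
  (∀ a, 0 ≤ π a) ∧ ∑ a, π a = 1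

/-- The point mass at `a`. -/
def unitMass {A : Type} [DecidableEq A] (a : A) : A → ℝ :=
  fun a' => if a' = a then 1 else 0

/-- The distribution `E[g(A_1,…,A_N)]` for `A_1,…,A_N` i.i.d. with law `μ`. -/
noncomputable def sampleExp {A : Type} [Fintype A] (N : ℕ)
    (g : (Fin N → A) → A → ℝ) (μ : A → ℝ) : A → ℝ :=
  ∑ v : Fin N → A, (∏ k, μ (v k)) • g v

/-!
`F(π)(a')` is a homogeneous polynomial of degree `N` in the values of `π`, with nonnegative
coefficients `g(v)(a')`; so `t • q ≤ p` makes every monomial at `p` at least `t ^ N` times the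
same monomial at `q`.
-/
open Finset

theorem pow_card_mul_prod_le_prod {ι R : Type*} [Fintype ι] [CommSemiring R] [PartialOrder R]
    [IsOrderedRing R] {t : R} {p q : ι → R} (ht : 0 ≤ t) (hq : ∀ i, 0 ≤ q i)
    (hqp : ∀ i, t * q i ≤ p i) :
    t ^ Fintype.card ι * ∏ i, q i ≤ ∏ i, p i :=
  calc t ^ Fintype.card ι * ∏ i, q i = ∏ i, t * q i := by
        rw [prod_mul_distrib, prod_const, card_univ]
    _ ≤ ∏ i, p i := prod_le_prod (fun i _ => mul_nonneg ht (hq i)) (fun i _ => hqp i)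

theorem sampleExp_apply {A : Type} [Fintype A] (N : ℕ) (g : (Fin N → A) → A → ℝ)
    (μ : A → ℝ) (a : A) :
    sampleExp N g μ a = ∑ v : Fin N → A, (∏ k, μ (v k)) * g v a := by
  simp only [sampleExp, Finset.sum_apply, Pi.smul_apply, smul_eq_mul]

theorem pow_mul_sampleExp_le {A : Type} [Fintype A] {N : ℕ} {g : (Fin N → A) → A → ℝ}
    {a : A} (hg : ∀ v, 0 ≤ g v a) {t : ℝ} {p q : A → ℝ} (ht : 0 ≤ t) (hq : ∀ a, 0 ≤ q a)
    (hqp : ∀ a, t * q a ≤ p a) :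
    t ^ N * sampleExp N g q a ≤ sampleExp N g p a := by
  rw [sampleExp_apply, sampleExp_apply, mul_sum]
  refine sum_le_sum fun v _ => ?_
  rw [← mul_assoc]
  refine mul_le_mul_of_nonneg_right ?_ (hg v)
  simpa only [Fintype.card_fin] using pow_card_mul_prod_le_prod ht (fun k => hq (v k)) (fun k => hqp (v k))

/-- Proposition: a necessary condition for sample representations.
If `F : Δ(A) → Δ(A)` arises from `N` action samples via `g : A^N → Δ(A)`, then for every
`a' ∈ A` and `t ∈ (0,1]` there is `λ(t) > 0` (one may take `λ(t) = t^N`) such that for all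
`p, q ∈ Δ(A)` with `p(a) ≥ t·q(a)` for every `a`, one has `F(p)(a') ≥ λ(t)·F(q)(a')`. -/
theorem stmt8 {A : Type} [Fintype A] (N : ℕ) (g : (Fin N → A) → A → ℝ)
    (hg : ∀ v, IsDist (g v)) (F : (A → ℝ) → A → ℝ)
    (hFg : ∀ π : A → ℝ, IsDist π → F π = sampleExp N g π) :
    ∀ (a' : A) (t : ℝ), 0 < t → t ≤ 1 →
      ∃ lam : ℝ, 0 < lam ∧ lam = t ^ N ∧
        ∀ p q : A → ℝ, IsDist p → IsDist q → (∀ a, t * q a ≤ p a) →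
          lam * F q a' ≤ F p a' := by
  intro a' t ht _
  refine ⟨t ^ N, pow_pos ht N, rfl, fun p q hp hq hqp => ?_⟩
  rw [hFg p hp, hFg q hq]
  exact pow_mul_sampleExp_le (fun v => (hg v).1 a') ht.le hq.1 hqp
end

section
/- Let A be a finite nonempty set, F : Δ(A) → Δ(A), and π₀ ∈ Δ(A). Then F is differentiable at π₀ if and only if there exist ρ ≥ 0 and τ : A → Δ(A) such that for every π₀' ∈ Δ(A), F(π₀ + ε(π₀' − π₀)) = F(π₀) + ε ρ (Σ_{a'∈A} τ(a') π₀'(a') − F(π₀)) + o(ε) as ε → 0⁺. -/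
open Filter Asymptotics Topology

/-!
Differentiability at `π₀` gives the directional derivatives `Dv a = ∂F(π₀)/∂π₀(a)`, read off at
the point mass `π₀' = a`. Since `F` maps `Δ(A)` into itself, each `Dv a` is a feasible direction
of the simplex at `F π₀`: its entries sum to zero and are nonnegative where `F π₀` vanishes. So
for one small `t > 0` all the points `τ a = F π₀ + t • Dv a` lie in `Δ(A)`, and `ρ = t⁻¹` gives
`Dv a = ρ • (τ a - F π₀)`. Conversely, given `ρ` and `τ`, this formula defines a derivative.
-/

open Set

theorem HasDerivWithinAt.mem_of_eventually_slope_mem {E : Type*} [NormedAddCommGroup E]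
    [NormedSpace ℝ E] {g : ℝ → E} {v : E} {T : Set E} (hT : IsClosed T)
    (hg : HasDerivWithinAt g v (Ioi 0) 0)
    (hT_slope : ∀ᶠ ε in 𝓝[>] (0 : ℝ), ε⁻¹ • (g ε - g 0) ∈ T) :
    v ∈ T := by
  have hslope : Tendsto (slope g 0) (𝓝[>] 0) (𝓝 v) :=
    (hasDerivWithinAt_iff_tendsto_slope' (lt_irrefl 0)).1 hg
  refine hT.mem_of_tendsto hslope ?_
  simpa only [slope_def_module, sub_zero] using hT_slope

theorem Finset.sum_smul_sub_of_sum_eq_one {ι R E : Type*} [Ring R] [AddCommGroup E]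
    [Module R E] {s : Finset ι} {w : ι → R} (hw : ∑ i ∈ s, w i = 1) (u : ι → E) (p : E) :
    ∑ i ∈ s, w i • (u i - p) = ∑ i ∈ s, w i • u i - p := by
  simp only [smul_sub, Finset.sum_sub_distrib, ← Finset.sum_smul, hw, one_smul]

section Simplex

variable {A : Type} [Fintype A]

/-- Directions `w` along which one can move from `p ∈ Δ(A)` while staying in `Δ(A)`. -/
def feasibleDirs (p : A → ℝ) : Set (A → ℝ) :=
  {w | ∑ b, w b = 0 ∧ ∀ b, p b = 0 → 0 ≤ w b}

theorem isClosed_feasibleDirs (p : A → ℝ) : IsClosed (feasibleDirs p) := by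
  simp only [feasibleDirs, ofPred_and, ofPred_forall]
  refine (isClosed_eq (continuous_finsetSum _ fun b _ => continuous_apply b)
    continuous_const).inter ?_
  exact isClosed_iInter fun b => isClosed_iInter fun _ => isClosed_le continuous_const
    (continuous_apply b)

theorem IsDist.smul_sub_mem_feasibleDirs {p q : A → ℝ} (hp : IsDist p) (hq : IsDist q)
    {c : ℝ} (hc : 0 ≤ c) : c • (q - p) ∈ feasibleDirs p := by
  refine ⟨?_, fun b hb => ?_⟩
  · simp only [Pi.smul_apply, Pi.sub_apply, smul_eq_mul, ← Finset.mul_sum,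
      Finset.sum_sub_distrib, hq.2, hp.2, sub_self, mul_zero]
  · simpa [hb] using mul_nonneg hc (hq.1 b)

theorem IsDist.eventually_add_smul {p w : A → ℝ} (hp : IsDist p) (hw : w ∈ feasibleDirs p) :
    ∀ᶠ t in 𝓝[>] (0 : ℝ), IsDist (p + t • w) := by
  have hsum : ∀ t : ℝ, ∑ b, (p + t • w) b = 1 := fun t => by
    simp [Finset.sum_add_distrib, ← Finset.mul_sum, hp.2, hw.1]
  have hnonneg : ∀ b, ∀ᶠ t in 𝓝[>] (0 : ℝ), 0 ≤ (p + t • w) b := by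
    intro b
    rcases (hp.1 b).eq_or_lt with hb | hb
    · filter_upwards [self_mem_nhdsWithin] with t ht
      simpa [← hb] using mul_nonneg (le_of_lt ht) (hw.2 b hb.symm)
    · have hcont : ContinuousAt (fun t : ℝ => (p + t • w) b) 0 := by fun_prop
      refine nhdsWithin_le_nhds ((hcont.eventually (lt_mem_nhds ?_)).mono fun t ht => ht.le)
      simpa using hb
  filter_upwards [eventually_all.2 hnonneg] with t ht using ⟨ht, hsum t⟩

theorem isDist_unitMass [DecidableEq A] (a : A) : IsDist (unitMass a) :=
  ⟨fun b => by unfold unitMass; split_ifs <;> norm_num, by simp [unitMass]⟩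

theorem sum_unitMass_smul [DecidableEq A] {E : Type*} [AddCommMonoid E] [Module ℝ E]
    (a : A) (u : A → E) : ∑ b, unitMass a b • u b = u a := by
  simp [unitMass, ite_smul]

theorem deriv_mem_feasibleDirs {F : (A → ℝ) → A → ℝ} (hF : ∀ π, IsDist π → IsDist (F π))
    {π₀ π' v : A → ℝ} (hπ₀ : IsDist π₀) (hπ' : IsDist π')
    (h : (fun ε : ℝ => F (π₀ + ε • (π' - π₀)) - F π₀ - ε • v) =o[𝓝[>] (0 : ℝ)] fun ε => ε) :
    v ∈ feasibleDirs (F π₀) := by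
  set g : ℝ → A → ℝ := fun ε => F (π₀ + ε • (π' - π₀))
  have hg0 : g 0 = F π₀ := by simp [g]
  have hg : HasDerivWithinAt g v (Ioi 0) 0 :=
    hasDerivWithinAt_iff_isLittleO.2 (by simpa [hg0] using h)
  refine hg.mem_of_eventually_slope_mem (isClosed_feasibleDirs _) ?_
  have hseg := hπ₀.eventually_add_smul (hπ₀.smul_sub_mem_feasibleDirs hπ' zero_le_one)
  filter_upwards [hseg, self_mem_nhdsWithin] with ε hε hpos
  rw [one_smul] at hε
  exact hg0 ▸ (hF π₀ hπ₀).smul_sub_mem_feasibleDirs (hF _ hε) (inv_nonneg.2 (le_of_lt hpos))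

end Simplex

/-- Proposition: equivalent definition of differentiability.
`F : Δ(A) → Δ(A)` is differentiable at `π₀ ∈ Δ(A)` if and only if there exist `ρ ≥ 0` and
`τ : A → Δ(A)` such that for every `π₀' ∈ Δ(A)`,
`F(π₀ + ε(π₀' − π₀)) = F(π₀) + ε ρ (Σ_{a'} τ(a') π₀'(a') − F(π₀)) + o(ε)` as `ε → 0⁺`. -/
theorem stmt12 {A : Type} [Fintype A] (F : (A → ℝ) → A → ℝ)
    (hF : ∀ π, IsDist π → IsDist (F π)) (π₀ : A → ℝ) (hπ₀ : IsDist π₀) :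
    (∃ Dv : A → A → ℝ, ∀ π' : A → ℝ, IsDist π' →
      (fun ε : ℝ => F (π₀ + ε • (π' - π₀)) - F π₀ - ε • ∑ a, π' a • Dv a)
        =o[𝓝[>] (0:ℝ)] fun ε => ε) ↔
    (∃ ρ : ℝ, 0 ≤ ρ ∧ ∃ τ : A → A → ℝ, (∀ a, IsDist (τ a)) ∧
      ∀ π' : A → ℝ, IsDist π' →
        (fun ε : ℝ => F (π₀ + ε • (π' - π₀)) - F π₀
            - ε • (ρ • ((∑ a, π' a • τ a) - F π₀)))
          =o[𝓝[>] (0:ℝ)] fun ε => ε) := by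
  classical
  have hlin : ∀ (ρ : ℝ) (τ : A → A → ℝ) (π' : A → ℝ), IsDist π' →
      ∑ a, π' a • (ρ • (τ a - F π₀)) = ρ • ((∑ a, π' a • τ a) - F π₀) := fun ρ τ π' hπ' => by
    simp only [smul_comm _ ρ, ← Finset.smul_sum, Finset.sum_smul_sub_of_sum_eq_one hπ'.2]
  constructor
  · rintro ⟨Dv, hDv⟩
    have hfeas : ∀ a, Dv a ∈ feasibleDirs (F π₀) := fun a =>
      deriv_mem_feasibleDirs hF hπ₀ (isDist_unitMass a) (by
        simpa only [sum_unitMass_smul] using hDv _ (isDist_unitMass a))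
    obtain ⟨t, htau, ht⟩ : ∃ t : ℝ, (∀ a, IsDist (F π₀ + t • Dv a)) ∧ 0 < t :=
      ((eventually_all.2 fun a => (hF π₀ hπ₀).eventually_add_smul (hfeas a)).and
        self_mem_nhdsWithin).exists
    refine ⟨t⁻¹, inv_nonneg.2 ht.le, fun a => F π₀ + t • Dv a, htau, fun π' hπ' => ?_⟩
    rw [← hlin _ _ _ hπ']
    simpa only [add_sub_cancel_left, inv_smul_smul₀ ht.ne'] using hDv π' hπ'
  · rintro ⟨ρ, -, τ, -, h⟩
    exact ⟨fun a => ρ • (τ a - F π₀), fun π' hπ' => hlin ρ τ π' hπ' ▸ h π' hπ'⟩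
end
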